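/- For the Erdős–Rényi modularity query vector q = v(A) − γ·(m/N)·1, with 0 < m < N edges and γ > 1, the latitude satisfies tan ℓ(q) = √((N−m)/m) / (γ−1), where ℓ(q) = d_a(q, −1). -/

import Mathlib

open Real BigOperators Filter

noncomputable section

/-- Index type for node pairs i < j of [n]. -/
abbrev PairIdx (n : ℕ) := {p : Fin n × Fin n // p.1 < p.2}

/-- Inner product on ℝ^N indexed by node pairs. -/
def inn {n : ℕ} (x y : PairIdx n → ℝ) : ℝ := ∑ p : PairIdx n, x p * y p

/-- Euclidean norm. -/
def nrm {n : ℕ} (x : PairIdx n → ℝ) : ℝ := Real.sqrt (inn x x)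

/-- Angular distance d_a(x,y) = arccos(⟨x,y⟩/(‖x‖‖y‖)). -/
def angDist {n : ℕ} (x y : PairIdx n → ℝ) : ℝ :=
  Real.arccos (inn x y / (nrm x * nrm y))

/-- The all-ones vector. -/
def allOnes (n : ℕ) : PairIdx n → ℝ := fun _ => 1

/-- Latitude ℓ(x) = d_a(x, -1). -/
def lat {n : ℕ} (x : PairIdx n → ℝ) : ℝ := angDist x (fun _ => -1)

/-- Clustering vector of a clustering given by a label function. -/
def bvec {n : ℕ} {L : Type*} [DecidableEq L] (c : Fin n → L) : PairIdx n → ℝ :=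
  fun p => if c p.1.1 = c p.1.2 then 1 else -1

/-- Intra-cluster pairs of a clustering. -/
def intraP {n : ℕ} {L : Type*} [DecidableEq L] (c : Fin n → L) : Finset (PairIdx n) :=
  Finset.univ.filter (fun p => c p.1.1 = c p.1.2)

/-- Inter-cluster pairs of a clustering. -/
def interP {n : ℕ} {L : Type*} [DecidableEq L] (c : Fin n → L) : Finset (PairIdx n) :=
  Finset.univ.filter (fun p => c p.1.1 ≠ c p.1.2)

/-- Pearson correlation between two vectors. -/
def pearson {n : ℕ} (x y : PairIdx n → ℝ) : ℝ :=
  inn (fun p => x p - inn x (allOnes n) / (n.choose 2 : ℝ))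
      (fun p => y p - inn y (allOnes n) / (n.choose 2 : ℝ)) /
  (nrm (fun p => x p - inn x (allOnes n) / (n.choose 2 : ℝ)) *
   nrm (fun p => y p - inn y (allOnes n) / (n.choose 2 : ℝ)))

/-! Since `cos ℓ(x) = -⟨x, 1⟩ / (‖x‖ √N)`, one has `tan ℓ(x) = √(N ‖x‖² - ⟨x, 1⟩²) / (-⟨x, 1⟩)`.
The numerator is invariant under shifting `x` by a multiple of `1`, so for `q` it equals its
value `√(N m - m²)` at the 0/1 vector `v(A)`, while `-⟨q, 1⟩ = (γ - 1) m`. -/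

theorem card_pairIdx (n : ℕ) : Fintype.card (PairIdx n) = n.choose 2 := by
  have e : (Σ j : Fin n, Fin j) ≃ PairIdx n :=
    { toFun := fun ⟨j, i⟩ => ⟨(⟨i, i.2.trans j.2⟩, j), i.2⟩
      invFun := fun ⟨(i, j), h⟩ => ⟨j, ⟨i, h⟩⟩
      left_inv := fun ⟨_, _⟩ => rfl
      right_inv := fun ⟨(_, _), _⟩ => rfl }
  rw [← Fintype.card_congr e, Fintype.card_sigma]
  simp only [Fintype.card_fin]
  rw [Fin.sum_univ_eq_sum_range (fun i => i) n, Finset.sum_range_id, Nat.choose_two_right]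

-- Valid for all `a b`: when `b ≤ 0` or `a = 0`, the junk values of `√` and `/` make both sides `0`.
theorem Real.tan_arccos_div_sqrt (a b : ℝ) : tan (arccos (a / √b)) = √(b - a ^ 2) / a := by
  rcases le_or_gt b 0 with hb | hb
  · simp [Real.sqrt_eq_zero'.2 hb, Real.sqrt_eq_zero'.2 (by nlinarith [sq_nonneg a] : b - a ^ 2 ≤ 0)]
  · rw [tan_arccos, div_pow, Real.sq_sqrt hb.le, one_sub_div hb.ne', Real.sqrt_div' _ hb.le]
    field_simp

section

variable {n : ℕ}

theorem inn_self_nonneg (x : PairIdx n → ℝ) : 0 ≤ inn x x :=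
  Finset.sum_nonneg fun p _ => mul_self_nonneg (x p)

theorem inn_neg_one (x : PairIdx n → ℝ) : inn x (fun _ => -1) = -∑ p, x p := by
  simp [inn]

theorem nrm_neg_one : nrm (fun _ : PairIdx n => (-1 : ℝ)) = √(Fintype.card (PairIdx n)) := by
  simp [nrm, inn]

theorem tan_lat (x : PairIdx n → ℝ) :
    tan (lat x) = √(Fintype.card (PairIdx n) * inn x x - (∑ p, x p) ^ 2) / -∑ p, x p := by
  rw [lat, angDist, inn_neg_one, nrm_neg_one, nrm, ← Real.sqrt_mul (inn_self_nonneg x),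
    Real.tan_arccos_div_sqrt, neg_sq, mul_comm]

theorem sum_sub_const (x : PairIdx n → ℝ) (c : ℝ) :
    ∑ p, (x p - c) = ∑ p, x p - Fintype.card (PairIdx n) * c := by
  simp [Finset.sum_sub_distrib]

theorem card_mul_inn_sub_sq_sum_sub_const (x : PairIdx n → ℝ) (c : ℝ) :
    Fintype.card (PairIdx n) * inn (fun p => x p - c) (fun p => x p - c) - (∑ p, (x p - c)) ^ 2 =
      Fintype.card (PairIdx n) * inn x x - (∑ p, x p) ^ 2 := by
  have hsq : inn (fun p => x p - c) (fun p => x p - c) =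
      inn x x - 2 * c * ∑ p, x p + Fintype.card (PairIdx n) * c ^ 2 := by
    simp only [inn, sub_mul, mul_sub, Finset.sum_sub_distrib, ← Finset.sum_mul, ← Finset.mul_sum,
      Finset.sum_const, Finset.card_univ, nsmul_eq_mul]
    ring
  rw [hsq, sum_sub_const]
  ring

theorem inn_self_of_binary {v : PairIdx n → ℝ} (hv : ∀ p, v p = 0 ∨ v p = 1) :
    inn v v = ∑ p, v p :=
  Finset.sum_congr rfl fun p _ => by rcases hv p with h | h <;> simp [h]

end

theorem stmt13_general (n m : ℕ) (v : PairIdx n → ℝ) (hv : ∀ p, v p = 0 ∨ v p = 1)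
    (hm : (m : ℝ) = ∑ p : PairIdx n, v p) (h0 : 0 < m) (h1 : m < n.choose 2)
    (γ : ℝ) :
    Real.tan (lat (fun p => v p - γ * ((m : ℝ) / (n.choose 2 : ℝ)))) =
      Real.sqrt (((n.choose 2 : ℝ) - (m : ℝ)) / (m : ℝ)) / (γ - 1) := by
  rw [tan_lat, card_mul_inn_sub_sq_sum_sub_const, inn_self_of_binary hv, sum_sub_const, ← hm,
    card_pairIdx]
  have hm0 : (0 : ℝ) < m := by exact_mod_cast h0
  have hN0 : (n.choose 2 : ℝ) ≠ 0 := by exact_mod_cast (h0.trans h1).ne'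
  set N : ℝ := (n.choose 2 : ℝ)
  have hnum : √(N * m - m ^ 2) = m * √((N - m) / m) := by
    rw [show N * m - m ^ 2 = m ^ 2 * ((N - m) / m) by field_simp,
      Real.sqrt_mul (sq_nonneg _), Real.sqrt_sq hm0.le]
  rw [hnum, show -(m - N * (γ * (m / N))) = m * (γ - 1) by field_simp; ring,
    mul_div_mul_left _ _ hm0.ne']

/-- tan ℓ(q) = √((N−m)/m)/(γ−1) for the ER-modularity query vector. -/
theorem stmt13 (n m : ℕ) (v : PairIdx n → ℝ) (hv : ∀ p, v p = 0 ∨ v p = 1)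
    (hm : (m : ℝ) = ∑ p : PairIdx n, v p) (h0 : 0 < m) (h1 : m < n.choose 2)
    (γ : ℝ) (hγ : 1 < γ) :
    Real.tan (lat (fun p => v p - γ * ((m : ℝ) / (n.choose 2 : ℝ)))) =
      Real.sqrt (((n.choose 2 : ℝ) - (m : ℝ)) / (m : ℝ)) / (γ - 1) :=
  stmt13_general n m v hv hm h0 h1 γ
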